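/- arXiv:2505.06728 — 3 statements merged into one kernel-verified Lean document; each statement's English description precedes it below -/
import Mathlib

section
/- The exponent (twiddle) matrix satisfies W^n_m = L^n_m · W^n_k · L^n_k, where n = k·m. -/
open Matrix Complex

/-- The primitive `n`-th root of unity `ω_n = exp(-2πi/n)`. -/
noncomputable def tw (n : ℕ) : ℂ := Complex.exp (-(2 * Real.pi * Complex.I) / n)

/-- The `n × n` DFT matrix `F_n = [ω_n^{kl}]`. -/
noncomputable def DFT (n : ℕ) : Matrix (Fin n) (Fin n) ℂ :=
  fun r c => tw n ^ (r.val * c.val)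

/-- The stride permutation `L^n_k` (with `n = k*m`), sending the basis vector
`e_{i,k} ⊗ e_{j,m}` (flat index `i*m+j`) to `e_{j,m} ⊗ e_{i,k}` (flat index `j*k+i`). -/
noncomputable def Lmat (n k m : ℕ) : Matrix (Fin n) (Fin n) ℂ :=
  fun r c => if r.val = (c.val % m) * k + c.val / m then 1 else 0

/-- The diagonal twiddle matrix `W^n_m` (with `n = k*m`), acting on
`e_{i,k} ⊗ e_{j,m}` (flat index `c = i*m+j`) by the scalar `ω_n^{ij}`. -/
noncomputable def Wmat (n m : ℕ) : Matrix (Fin n) (Fin n) ℂ :=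
  fun r c => if r = c then tw n ^ ((c.val / m) * (c.val % m)) else 0

/-- Entry of a `k × k` matrix at natural-number indices (0 outside range). -/
noncomputable def ment {k : ℕ} (A : Matrix (Fin k) (Fin k) ℂ) (i j : ℕ) : ℂ :=
  if h : i < k ∧ j < k then A ⟨i, h.1⟩ ⟨j, h.2⟩ else 0

/-- Kronecker product `A ⊗ B` of a `k×k` and an `m×m` matrix, written on flat
indices of size `n = k*m` (row-major: index `i*m+j ↔ e_{i,k} ⊗ e_{j,m}`). -/
noncomputable def kron (n k m : ℕ) (A : Matrix (Fin k) (Fin k) ℂ)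
    (B : Matrix (Fin m) (Fin m) ℂ) : Matrix (Fin n) (Fin n) ℂ :=
  fun r c => ment A (r.val / m) (c.val / m) * ment B (r.val % m) (c.val % m)

/-- Value of a digit list `[d_0, d_1, …]` in the mixed-radix system with radices
`[c_0, c_1, …]` (least-significant first): `d_0 + c_0*(d_1 + c_1*(…))`. -/
def mval : List ℕ → List ℕ → ℕ
  | c :: cs, d :: ds => d + c * mval cs ds
  | _, _ => 0

/-- Digits (least-significant first) of `x` in the mixed-radix system with
radices `[c_0, c_1, …]` (least-significant first). -/
def mdig : List ℕ → ℕ → List ℕ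
  | [], _ => []
  | c :: cs, x => x % c :: mdig cs (x / c)

/-- The digit-reversal permutation `P_α` of a multi-index `α = (n_K, …, n_0)`,
where `a = [n_0, …, n_K]` lists the radices of the system generated by `α`
least-significant first: `x` is decomposed in the system generated by
`α* = (n_0, …, n_K)` and re-read with reversed digits in the system of `α`. -/
def mrev (a : List ℕ) (x : ℕ) : ℕ := mval a ((mdig a.reverse x).reverse)

/-- The digit-reversal permutation matrix `S_α`, `S_α e_x = e_{P_α x}`;
`a = [n_0, …, n_K]` lists `α = (n_K, …, n_0)` least-significant first. -/
noncomputable def Smat (n : ℕ) (a : List ℕ) : Matrix (Fin n) (Fin n) ℂ :=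
  fun r c => if r.val = mrev a c.val then 1 else 0

/-- The diagonal matrix `V_{k,m,n}` of size `N = k*m*n`, acting on
`e_{i,k} ⊗ e_{j,m} ⊗ e_{ℓ,n}` (flat index `i*(m*n) + j*n + ℓ`) by
`ω_{kmn}^{i(ℓ m + j)}`. -/
noncomputable def Vmat (N k m n : ℕ) : Matrix (Fin N) (Fin N) ℂ :=
  fun r c => if r = c then
    tw (k * m * n) ^ ((c.val / (m * n)) * ((c.val % n) * m + (c.val / n) % m)) else 0

/-! `L^n_k` is the permutation matrix of the stride permutation `σ : i * m + j ↦ j * k + i` and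
`L^n_m` that of `σ⁻¹`, so `L^n_m W^n_k L^n_k` is the diagonal matrix `W^n_k` with its diagonal
permuted by `σ`. Since `σ` just swaps the two digits `(i, j)` of an index, the entry `ω_n^{ij}`
becomes `ω_n^{ji}`. -/

theorem PEquiv.toMatrix_toPEquiv_mul_diagonal_mul_symm {l m α : Type*} [Fintype m]
    [DecidableEq l] [DecidableEq m] [NonAssocSemiring α] (σ : l ≃ m) (d : m → α) :
    (σ.toPEquiv.toMatrix : Matrix l m α) * diagonal d *
      (σ.symm.toPEquiv.toMatrix : Matrix m l α) = diagonal (d ∘ σ) := by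
  rw [PEquiv.toMatrix_toPEquiv_mul, PEquiv.mul_toMatrix_toPEquiv, Equiv.symm_symm,
    submatrix_submatrix, Function.comp_id, Function.id_comp, submatrix_diagonal_equiv]

def strideEquiv {n k m : ℕ} (hn : n = k * m) : Fin n ≃ Fin n :=
  (finCongr hn).trans <| finProdFinEquiv.symm.trans <|
    (Equiv.prodComm _ _).trans <| finProdFinEquiv.trans (finCongr (hn.trans (mul_comm k m)).symm)

theorem strideEquiv_apply_val {n k m : ℕ} (hn : n = k * m) (c : Fin n) :
    (strideEquiv hn c : ℕ) = c % m * k + c / m := by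
  simp only [strideEquiv, Equiv.trans_apply, finCongr_apply, finProdFinEquiv_symm_apply,
    Equiv.prodComm_apply, Prod.swap_prod_mk, Fin.val_cast, finProdFinEquiv_apply_val,
    Fin.coe_divNat, Fin.coe_modNat]
  ring

theorem Fin.val_div_lt_of_eq_mul {n k m : ℕ} (hn : n = k * m) (c : Fin n) : (c : ℕ) / m < k :=
  Nat.div_lt_of_lt_mul (hn.trans (mul_comm k m) ▸ c.isLt)

theorem strideEquiv_apply_div {n k m : ℕ} (hn : n = k * m) (c : Fin n) :
    (strideEquiv hn c : ℕ) / k = c % m := by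
  have h := Fin.val_div_lt_of_eq_mul hn c
  rw [strideEquiv_apply_val, Nat.add_comm, Nat.add_mul_div_right _ _ (Nat.zero_lt_of_lt h),
    Nat.div_eq_of_lt h, zero_add]

theorem strideEquiv_apply_mod {n k m : ℕ} (hn : n = k * m) (c : Fin n) :
    (strideEquiv hn c : ℕ) % k = c / m := by
  rw [strideEquiv_apply_val, Nat.mul_add_mod_self_right,
    Nat.mod_eq_of_lt (Fin.val_div_lt_of_eq_mul hn c)]

theorem strideEquiv_symm {n k m : ℕ} (hkm : n = k * m) (hmk : n = m * k) :
    (strideEquiv hkm).symm = strideEquiv hmk := by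
  refine Equiv.ext fun c => ?_
  rw [Equiv.symm_apply_eq, Fin.ext_iff, strideEquiv_apply_val, strideEquiv_apply_div,
    strideEquiv_apply_mod, Nat.div_add_mod']

theorem Lmat_eq_toMatrix {n k m : ℕ} (hn : n = k * m) :
    Lmat n k m = (strideEquiv hn).symm.toPEquiv.toMatrix := by
  ext r c
  simp [Lmat, PEquiv.toMatrix_apply, Equiv.symm_apply_eq, Fin.ext_iff, strideEquiv_apply_val]

theorem Wmat_eq_diagonal (n m : ℕ) :
    Wmat n m = diagonal fun c : Fin n => tw n ^ ((c : ℕ) / m * (c % m)) := by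
  ext r c
  by_cases h : r = c <;> simp [Wmat, h]

theorem twiddle_conj_general (k m n : ℕ) (hn : n = k * m) :
    Wmat n m = Lmat n m k * Wmat n k * Lmat n k m := by
  have hn' : n = m * k := hn.trans (mul_comm k m)
  rw [Lmat_eq_toMatrix hn, Lmat_eq_toMatrix hn', strideEquiv_symm hn' hn,
    Wmat_eq_diagonal, Wmat_eq_diagonal, PEquiv.toMatrix_toPEquiv_mul_diagonal_mul_symm]
  congr 1
  funext c
  simp only [Function.comp_apply, strideEquiv_apply_div, strideEquiv_apply_mod, mul_comm]

/-- `W^n_m = L^n_m · W^n_k · L^n_k` for `n = k·m`. -/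
theorem twiddle_conj (k m n : ℕ) (hk : 0 < k) (hm : 0 < m) (hn : n = k * m) :
    Wmat n m = Lmat n m k * Wmat n k * Lmat n k m :=
  twiddle_conj_general k m n hn
end

section
/- For a multi-index α with |α| = N and any M > 0, the digit-reversal permutation matrices satisfy S_{(M,α)} = (I_M ⊗ S_α) L^{NM}_N. -/
open Matrix Complex

/-! In the system of `(M, α)* = (n_0, …, n_K, M)` the least significant digit of `x` is `x % M`,
and the remaining digits are those of `x / M` in the system of `α*`. Reversal makes `x % M` the
most significant digit, so `P_{(M,α)} x = P_α (x / M) + N (x % M)` with `P_α (x / M) < N`.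
Hence the nonzero entry of column `x` of `S_{(M,α)}` sits in the row `r` with `r / N = x % M`
and `r % N = P_α (x / M)`; the stride permutation sends `x` to `(x % M) N + x / M`, and
`I_M ⊗ S_α` then applies `P_α` to the low part, which produces the same row. -/

theorem mdig_length (cs : List ℕ) (x : ℕ) : (mdig cs x).length = cs.length := by
  induction cs generalizing x with
  | nil => rfl
  | cons c cs ih => simp [mdig, ih]

theorem forall₂_mdig_lt (cs : List ℕ) (hcs : ∀ c ∈ cs, 0 < c) (x : ℕ) :
    List.Forall₂ (· < ·) (mdig cs x) cs := by
  induction cs generalizing x with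
  | nil => exact .nil
  | cons c cs ih =>
    exact .cons (Nat.mod_lt _ (hcs c List.mem_cons_self))
      (ih (fun c' hc' => hcs c' (List.mem_cons_of_mem _ hc')) _)

theorem mval_lt_prod {ds cs : List ℕ} (h : List.Forall₂ (· < ·) ds cs) :
    mval cs ds < cs.prod := by
  induction h with
  | nil => simp [mval]
  | @cons d c ds cs hdc _ ih =>
    show d + c * mval cs ds < c * cs.prod
    calc d + c * mval cs ds < c * (mval cs ds + 1) := by rw [mul_add_one]; omega
      _ ≤ c * cs.prod := Nat.mul_le_mul_left c ih

theorem mrev_lt_prod (a : List ℕ) (ha : 0 < a.prod) (x : ℕ) : mrev a x < a.prod := by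
  have hpos : ∀ c ∈ a.reverse, 0 < c := fun c hc =>
    Nat.pos_of_ne_zero fun hc0 => ha.ne' (List.prod_eq_zero_iff.2 (hc0 ▸ List.mem_reverse.1 hc))
  have h := mval_lt_prod (List.forall₂_reverse_iff.2 (forall₂_mdig_lt _ hpos x))
  rwa [List.reverse_reverse] at h

theorem mval_append_singleton (a ds : List ℕ) (h : ds.length = a.length) (M d : ℕ) :
    mval (a ++ [M]) (ds ++ [d]) = mval a ds + a.prod * d := by
  induction a generalizing ds with
  | nil => simp_all [mval]
  | cons c cs ih =>
    obtain _ | ⟨e, es⟩ := ds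
    · simp at h
    · show e + c * mval (cs ++ [M]) (es ++ [d]) = (e + c * mval cs es) + c * cs.prod * d
      rw [ih es (by simpa using h)]
      ring

theorem mrev_append_singleton (a : List ℕ) (M x : ℕ) :
    mrev (a ++ [M]) x = mrev a (x / M) + a.prod * (x % M) := by
  rw [mrev, mrev, List.reverse_append]
  simpa [mdig, mdig_length] using mval_append_singleton a _ (by simp [mdig_length]) M (x % M)

theorem stride_lt {k m c : ℕ} (hc : c < k * m) : c % m * k + c / m < k * m := by
  have hm : 0 < m := Nat.pos_of_mul_pos_left (c.zero_le.trans_lt hc)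
  have hcm : c / m < k := Nat.div_lt_of_lt_mul (by rwa [mul_comm])
  calc c % m * k + c / m < (c % m + 1) * k := by rw [add_one_mul]; omega
    _ ≤ m * k := Nat.mul_le_mul_right k (Nat.mod_lt c hm)
    _ = k * m := mul_comm m k

theorem mul_Lmat_apply {k m : ℕ} (A : Matrix (Fin (k * m)) (Fin (k * m)) ℂ) (r c : Fin (k * m)) :
    (A * Lmat (k * m) k m) r c = A r ⟨c % m * k + c / m, stride_lt c.isLt⟩ := by
  rw [Matrix.mul_apply, Finset.sum_eq_single ⟨_, stride_lt c.isLt⟩]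
  · simp [Lmat]
  · intro t _ ht
    have ht' : (t : ℕ) ≠ c % m * k + c / m := fun h => ht (Fin.ext h)
    simp [Lmat, ht']
  · simp

theorem kron_one_apply {k m : ℕ} (B : Matrix (Fin m) (Fin m) ℂ) (r c : Fin (m * k)) :
    kron (m * k) k m 1 B r c = if r / m = c / m then ment B (r % m) (c % m) else 0 := by
  have hdiv (i : Fin (m * k)) : (i : ℕ) / m < k := Nat.div_lt_of_lt_mul i.isLt
  simp only [kron, ment, dif_pos (And.intro (hdiv r) (hdiv c)), one_apply, Fin.mk.injEq]
  split_ifs <;> simp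

theorem ment_Smat {n : ℕ} (a : List ℕ) {i j : ℕ} (hi : i < n) (hj : j < n) :
    ment (Smat n a) i j = if i = mrev a j then 1 else 0 :=
  dif_pos ⟨hi, hj⟩

theorem digit_reversal_extend_left_general (a : List ℕ) (M N : ℕ) (hN : N = a.prod) :
    Smat (N * M) (a ++ [M]) = kron (N * M) M N 1 (Smat N a) * Lmat (N * M) N M := by
  subst hN
  ext r c
  have hN : 0 < a.prod := Nat.pos_of_mul_pos_right ((Nat.zero_le _).trans_lt r.isLt)
  have hcM : c / M < a.prod := Nat.div_lt_of_lt_mul (c.isLt.trans_eq (mul_comm _ _))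
  have hrev := mrev_lt_prod a hN (c / M)
  obtain ⟨hdiv, hmod⟩ : (c % M * a.prod + c / M) / a.prod = c % M ∧
      (c % M * a.prod + c / M) % a.prod = c / M :=
    (Nat.div_mod_unique hN).2 ⟨by ring, hcM⟩
  rw [mul_Lmat_apply, kron_one_apply, ment_Smat a (Nat.mod_lt _ hN) (Nat.mod_lt _ hN)]
  have hrow : r / a.prod = c % M ∧ r % a.prod = mrev a (c / M) ↔
      r = mrev a (c / M) + a.prod * (c % M) := by
    rw [Nat.div_mod_unique hN, and_iff_left hrev, eq_comm]
  simp only [Smat, mrev_append_singleton, hdiv, hmod, ← ite_and, hrow]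

/-- `S_{(M,α)} = (I_M ⊗ S_α) L^{NM}_N`, where `|α| = N`, `M > 0`,
and `(M,α)` extends the multi-index `α = (n_K,…,n_0)` by `M` on the left
(most significant side), i.e. the least-significant-first radix list becomes
`a ++ [M]`. -/
theorem digit_reversal_extend_left (a : List ℕ) (ha : ∀ x ∈ a, 0 < x)
    (M N : ℕ) (hM : 0 < M) (hN : N = a.prod) :
    Smat (N * M) (a ++ [M]) = kron (N * M) M N 1 (Smat N a) * Lmat (N * M) N M :=
  digit_reversal_extend_left_general a M N hN
end

section
/- In the DIT factorization, the permutation matrix A_k = I_{N/N_k} ⊗ L^{N_k}_{n_k} acts on indices by moving the k-th digit: if n has digit representation p = (p_K, …, p_{k+1}, p_k, p_0, p_1, …, p_{k-1}) in the system generated by β_{k-1} = (n_K, …, n_{k+1}, n_k, n_0, …, n_{k-1}), then A_k maps e_n to e_m where m has digits (p_K, …, p_{k+1}, p_0, …, p_{k-1}, p_k) in the system generated by β_k = (n_K, …, n_{k+1}, n_0, …, n_k). -/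
open Matrix Complex

/-! Write `P = n_0 ⋯ n_{k-1}`, `v` for the value of the low digits `(p_0, …, p_{k-1})` and `R` for
that of the high digits `(p_{k+1}, …, p_K)`. The source index is `(v + P p_k) + N_k R` and the target
index is `(p_k + n_k v) + N_k R`, so `I_{N/N_k} ⊗ L^{N_k}_{n_k}` leaves the block `R` alone and, inside
it, `L^{N_k}_{n_k}` exchanges the two mixed-radix digits `(p_k, v)` of radices `(n_k, P)`. -/

theorem mval_cons (c d : ℕ) (cs ds : List ℕ) : mval (c :: cs) (d :: ds) = d + c * mval cs ds :=
  rfl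

theorem mval_append {c₁ d₁ : List ℕ} (c₂ d₂ : List ℕ) (h : d₁.length = c₁.length) :
    mval (c₁ ++ c₂) (d₁ ++ d₂) = mval c₁ d₁ + c₁.prod * mval c₂ d₂ := by
  induction c₁ generalizing d₁ with
  | nil =>
    rw [List.length_eq_zero_iff.1 h]
    simp [mval]
  | cons c cs ih =>
    obtain _ | ⟨e, ds⟩ := d₁
    · simp at h
    · rw [List.cons_append, List.cons_append, mval_cons, mval_cons, ih (by simpa using h),
        List.prod_cons]
      ring

theorem mval_lt_prod_s11 {c d : List ℕ} (h : List.Forall₂ (· < ·) d c) : mval c d < c.prod := by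
  induction h with
  | nil => simp [mval]
  | cons hxy _ ih => exact Nat.add_mul_lt_mul_of_lt_of_lt hxy ih

theorem List.Forall₂.rel_getD {α β : Type*} {R : α → β → Prop} {l₁ : List α} {l₂ : List β}
    (h : List.Forall₂ R l₁ l₂) {k : ℕ} (hk : k < l₂.length) (x : α) (y : β) :
    R (l₁.getD k x) (l₂.getD k y) := by
  have hk₁ : k < l₁.length := h.length_eq ▸ hk
  have hdrop := List.forall₂_drop k h
  rw [List.drop_eq_getElem_cons hk₁, List.drop_eq_getElem_cons hk] at hdrop
  rw [List.getD_eq_getElem _ _ hk₁, List.getD_eq_getElem _ _ hk]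
  exact (List.forall₂_cons.1 hdrop).1

theorem Lmat_mulVec_single (n k m : ℕ) (c r : Fin n) (hr : r.val = c.val % m * k + c.val / m) :
    Lmat n k m *ᵥ Pi.single c 1 = Pi.single r 1 := by
  funext x
  simp [Lmat, Pi.single_apply, Fin.ext_iff, hr]

theorem kron_one_mulVec_single {N Q M : ℕ} (hN : N ≤ Q * M) (B : Matrix (Fin M) (Fin M) ℂ)
    (c r : Fin N) (u u' : Fin M) (hu : c.val % M = u) (hr : r.val = c.val / M * M + u')
    (hB : B *ᵥ Pi.single u 1 = Pi.single u' 1) :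
    kron N Q M 1 B *ᵥ Pi.single c 1 = Pi.single r 1 := by
  have hcQ : c.val / M < Q :=
    Nat.div_lt_of_lt_mul (c.isLt.trans_le (hN.trans_eq (Nat.mul_comm Q M)))
  have hcol (i : ℕ) (hi : i < M) : B ⟨i, hi⟩ u = if i = u' then 1 else 0 := by
    simpa [Matrix.mulVec_single_one, Pi.single_apply, Fin.ext_iff] using congrFun hB ⟨i, hi⟩
  funext x
  have hxr : x = r ↔ x.val / M = c.val / M ∧ x.val % M = u' := by
    rw [Fin.ext_iff, hr]
    constructor
    · intro h
      rw [h, Nat.mul_comm, Nat.mul_add_div u'.pos, Nat.div_eq_of_lt u'.isLt, Nat.mul_add_mod,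
        Nat.mod_eq_of_lt u'.isLt]
      exact ⟨Nat.add_zero _, rfl⟩
    · rintro ⟨hdiv, hmod⟩
      rw [← Nat.div_add_mod x.val M, hdiv, hmod, Nat.mul_comm]
  simp only [Matrix.mulVec_single_one, Matrix.col_apply, kron, ment, Matrix.one_apply, hu,
    Fin.mk.injEq, Pi.single_apply, hxr]
  rw [dif_pos (⟨Nat.mod_lt _ u.pos, u.isLt⟩ : x.val % M < M ∧ u.val < M), hcol]
  by_cases h : x.val / M = c.val / M
  · simp [h, hcQ]
  · simp [h]

theorem dit_stage_permutation_general (a d : List ℕ)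
    (hd : List.Forall₂ (· < ·) d a)
    (k : ℕ) (hkK : k < a.length)
    (N : ℕ) (hN : N = a.prod) :
    ∀ (cI rI : Fin N),
      cI.val = mval ((a.take k).reverse ++ a.getD k 1 :: a.drop (k + 1))
                    ((d.take k).reverse ++ d.getD k 0 :: d.drop (k + 1)) →
      rI.val = mval (a.getD k 1 :: (a.take k).reverse ++ a.drop (k + 1))
                    (d.getD k 0 :: (d.take k).reverse ++ d.drop (k + 1)) →
      (kron N (N / (a.take (k + 1)).prod) ((a.take (k + 1)).prod) 1
          (Lmat ((a.take (k + 1)).prod) (a.getD k 1)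
            ((a.take (k + 1)).prod / a.getD k 1))) *ᵥ
        Pi.single cI 1 = Pi.single rI 1 := by
  intro cI rI hc hr
  set P := (a.take k).prod
  set n := a.getD k 1
  set j := d.getD k 0
  set v := mval (a.take k).reverse (d.take k).reverse
  set R := mval (a.drop (k + 1)) (d.drop (k + 1))
  have hv : v < P := by
    simpa using mval_lt_prod_s11 (List.forall₂_reverse_iff.2 (List.forall₂_take k hd))
  have hj : j < n := hd.rel_getD hkK 0 1
  have hNk : (a.take (k + 1)).prod = P * n := by
    rw [List.prod_take_succ a k hkK, ← List.getD_eq_getElem a 1 hkK]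
  have hdvd : P * n ∣ N := hNk ▸ hN ▸ Dvd.intro _ (List.prod_take_mul_prod_drop a (k + 1))
  have hlen : (d.take k).reverse.length = (a.take k).reverse.length := by simp [hd.length_eq]
  have hu : v + P * j < P * n := Nat.add_mul_lt_mul_of_lt_of_lt hv hj
  have hu' : j + n * v < P * n := Nat.mul_comm n P ▸ Nat.add_mul_lt_mul_of_lt_of_lt hj hv
  have hc' : cI.val = v + P * j + P * n * R := by
    rw [hc, mval_append _ _ hlen, mval_cons, List.prod_reverse]
    ring
  have hr' : rI.val = j + n * v + P * n * R := by
    rw [hr, List.cons_append, List.cons_append, mval_cons, mval_append _ _ hlen, List.prod_reverse]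
    ring
  rw [hNk]
  apply kron_one_mulVec_single (Nat.div_mul_cancel hdvd).ge _ _ _ ⟨v + P * j, hu⟩ ⟨j + n * v, hu'⟩
  · rw [hc', Nat.add_mul_mod_self_left, Nat.mod_eq_of_lt hu]
  · rw [hc', hr', Nat.add_mul_div_left _ _ hu.pos, Nat.div_eq_of_lt hu]
    ring
  · apply Lmat_mulVec_single
    rw [Nat.mul_div_cancel _ (j.zero_le.trans_lt hj), Nat.add_mul_mod_self_left, Nat.mod_eq_of_lt hv,
      Nat.add_mul_div_left _ _ (v.zero_le.trans_lt hv), Nat.div_eq_of_lt hv]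
    ring

/-- the permutation `A_k = I_{N/N_k} ⊗ L^{N_k}_{n_k}` acts on
indices by moving the `k`-th digit: it maps the basis vector indexed by the
number with digits `(p_K,…,p_{k+1},p_k,p_0,…,p_{k-1})` in the system generated
by `β_{k-1} = (n_K,…,n_{k+1},n_k,n_0,…,n_{k-1})` to the basis vector indexed by
the number with digits `(p_K,…,p_{k+1},p_0,…,p_{k-1},p_k)` in the system
generated by `β_k = (n_K,…,n_{k+1},n_0,…,n_k)`.
Here `a = [n_0,…,n_K]` and `d = [p_0,…,p_K]` (least significant first). -/
theorem dit_stage_permutation (a d : List ℕ) (ha : ∀ x ∈ a, 0 < x)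
    (hd : List.Forall₂ (· < ·) d a)
    (k : ℕ) (hk1 : 1 ≤ k) (hkK : k < a.length)
    (N : ℕ) (hN : N = a.prod) :
    ∀ (cI rI : Fin N),
      cI.val = mval ((a.take k).reverse ++ a.getD k 1 :: a.drop (k + 1))
                    ((d.take k).reverse ++ d.getD k 0 :: d.drop (k + 1)) →
      rI.val = mval (a.getD k 1 :: (a.take k).reverse ++ a.drop (k + 1))
                    (d.getD k 0 :: (d.take k).reverse ++ d.drop (k + 1)) →
      (kron N (N / (a.take (k + 1)).prod) ((a.take (k + 1)).prod) 1
          (Lmat ((a.take (k + 1)).prod) (a.getD k 1)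
            ((a.take (k + 1)).prod / a.getD k 1))) *ᵥ
        Pi.single cI 1 = Pi.single rI 1 :=
  dit_stage_permutation_general a d hd k hkK N hN
end
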